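/- For λ ≥ 0, μ > 0, p > 1, and x₊ > 0, the period integral T(x₊) := 4∫₀¹ ds / √(λ(1−s²) + (2μ/(p+1)) x₊^{p−1}(1−s^{p+1})) is well defined (the integrand is integrable) and is strictly decreasing as a function of x₊ on (0,∞). -/

import Mathlib

/-!
Write the integrand as `1 / √D(s)` with `D(s) = λ(1 - s²) + c(1 - s^{p+1})`, `c = (2μ/(p+1)) x₊^{p-1}`.
Since `s^{p+1} ≤ s` on `[0,1]`, `D(s) ≥ c(1 - s)`, so the integrand is dominated by the integrable
`c^{-1/2}(1 - s)^{-1/2}`. For `s ∈ (0,1)` the integrand is strictly decreasing in `c`, and `c` is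
strictly increasing in `x₊`.
-/

open MeasureTheory intervalIntegral Set

noncomputable def periodIntegrand (lam c q s : ℝ) : ℝ :=
  1 / √(lam * (1 - s ^ 2) + c * (1 - s ^ q))

section

variable {lam c q s : ℝ}

lemma mul_one_sub_le_denom (hlam : 0 ≤ lam) (hc : 0 ≤ c) (hq : 1 ≤ q)
    (hs : s ∈ Icc (0 : ℝ) 1) :
    c * (1 - s) ≤ lam * (1 - s ^ 2) + c * (1 - s ^ q) := by
  have hsq : s ^ q ≤ s := Real.rpow_le_self_of_le_one hs.1 hs.2 hq
  have hlam_term : 0 ≤ lam * (1 - s ^ 2) := mul_nonneg hlam (by nlinarith [hs.1, hs.2])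
  nlinarith [mul_le_mul_of_nonneg_left hsq hc]

lemma periodIntegrand_le (hlam : 0 ≤ lam) (hc : 0 < c) (hq : 1 ≤ q) (hs : s ∈ Ico (0 : ℝ) 1) :
    periodIntegrand lam c q s ≤ (√c)⁻¹ * (1 - s) ^ (-(1 / 2) : ℝ) := by
  have hs' : 0 < 1 - s := by linarith [hs.2]
  calc periodIntegrand lam c q s ≤ 1 / √(c * (1 - s)) :=
        one_div_le_one_div_of_le (Real.sqrt_pos.mpr (mul_pos hc hs')) <| Real.sqrt_le_sqrt <|
          mul_one_sub_le_denom hlam hc.le hq (Ico_subset_Icc_self hs)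
    _ = (√c)⁻¹ * (1 - s) ^ (-(1 / 2) : ℝ) := by
        rw [Real.sqrt_mul hc.le, one_div, mul_inv, Real.rpow_neg hs'.le, ← Real.sqrt_eq_rpow]

lemma intervalIntegrable_periodIntegrand (hlam : 0 ≤ lam) (hc : 0 < c) (hq : 1 ≤ q) :
    IntervalIntegrable (periodIntegrand lam c q) volume 0 1 := by
  have hbound : IntervalIntegrable (fun s : ℝ => (√c)⁻¹ * (1 - s) ^ (-(1 / 2) : ℝ)) volume 0 1 := by
    have hsing : IntervalIntegrable (fun s : ℝ => s ^ (-(1 / 2) : ℝ)) volume 0 1 :=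
      intervalIntegrable_rpow' (by norm_num)
    simpa using (hsing.comp_sub_left 1).symm.const_mul (√c)⁻¹
  refine hbound.mono_fun
    (by unfold periodIntegrand; exact Measurable.aestronglyMeasurable (by fun_prop)) ?_
  rw [Filter.EventuallyLE, uIoc_of_le zero_le_one, ← ae_restrict_congr_set Ioo_ae_eq_Ioc]
  filter_upwards [ae_restrict_mem measurableSet_Ioo] with s hs
  have hs' : s ∈ Ico (0 : ℝ) 1 := Ioo_subset_Ico_self hs
  rw [Real.norm_of_nonneg (by unfold periodIntegrand; positivity),
    Real.norm_of_nonneg (mul_nonneg (by positivity) (Real.rpow_nonneg (by linarith [hs'.2]) _))]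
  exact periodIntegrand_le hlam hc hq hs'

lemma periodIntegrand_strictAntiOn (hlam : 0 ≤ lam) (hq : 0 < q) (hs : s ∈ Ioo (0 : ℝ) 1) :
    StrictAntiOn (fun c => periodIntegrand lam c q s) (Ioi 0) := by
  intro a ha b _ hab
  have hsq : 0 < 1 - s ^ q := sub_pos.mpr (Real.rpow_lt_one hs.1.le hs.2 hq)
  have hlam_term : 0 ≤ lam * (1 - s ^ 2) := mul_nonneg hlam (by nlinarith [hs.1, hs.2])
  have hDa : 0 < lam * (1 - s ^ 2) + a * (1 - s ^ q) := by
    nlinarith [mul_pos (mem_Ioi.mp ha) hsq]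
  have hDab : lam * (1 - s ^ 2) + a * (1 - s ^ q) < lam * (1 - s ^ 2) + b * (1 - s ^ q) := by
    nlinarith [mul_lt_mul_of_pos_right hab hsq]
  exact one_div_lt_one_div_of_lt (Real.sqrt_pos.mpr hDa) (Real.sqrt_lt_sqrt hDa.le hDab)

lemma integral_periodIntegrand_strictAntiOn (hlam : 0 ≤ lam) (hq : 1 ≤ q) :
    StrictAntiOn (fun c => ∫ s in (0 : ℝ)..1, periodIntegrand lam c q s) (Ioi 0) := by
  intro a ha b hb hab
  have ha_int := intervalIntegrable_periodIntegrand hlam ha hq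
  have hb_int := intervalIntegrable_periodIntegrand hlam hb hq
  have hgap : 0 < ∫ s in (0 : ℝ)..1, (periodIntegrand lam a q s - periodIntegrand lam b q s) :=
    intervalIntegral_pos_of_pos_on (ha_int.sub hb_int)
      (fun s hs => sub_pos.mpr (periodIntegrand_strictAntiOn hlam (by linarith) hs ha hb hab))
      zero_lt_one
  rw [integral_sub ha_int hb_int] at hgap
  exact sub_pos.mp hgap

end

/-- For `λ ≥ 0`, `μ > 0`, `p > 1`, the period integral
`T(x₊) = 4∫₀¹ ds/√(λ(1−s²) + (2μ/(p+1)) x₊^{p−1}(1−s^{p+1}))` is well defined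
for every `x₊ > 0` and strictly decreasing in `x₊` on `(0,∞)`. -/
theorem stmt9 (lam μ p : ℝ) (hlam : 0 ≤ lam) (hμ : 0 < μ) (hp : 1 < p) :
    (∀ x : ℝ, 0 < x → IntervalIntegrable
      (fun s : ℝ => 1 / Real.sqrt (lam * (1 - s ^ 2) +
        (2 * μ / (p + 1)) * x ^ (p - 1) * (1 - s ^ (p + 1))))
      volume 0 1) ∧
    StrictAntiOn (fun x : ℝ =>
      4 * ∫ s in (0:ℝ)..1, 1 / Real.sqrt (lam * (1 - s ^ 2) +
        (2 * μ / (p + 1)) * x ^ (p - 1) * (1 - s ^ (p + 1))))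
      (Set.Ioi 0) := by
  set c : ℝ → ℝ := fun x => 2 * μ / (p + 1) * x ^ (p - 1)
  have hq : (1 : ℝ) ≤ p + 1 := by linarith
  have hc_maps : MapsTo c (Ioi 0) (Ioi 0) := fun x hx =>
    mul_pos (by positivity) (Real.rpow_pos_of_pos hx _)
  have hc_mono : StrictMonoOn c (Ioi 0) := fun x hx y _ hxy =>
    mul_lt_mul_of_pos_left (Real.rpow_lt_rpow (le_of_lt hx) hxy (by linarith)) (by positivity)
  refine ⟨fun x hx => intervalIntegrable_periodIntegrand hlam (hc_maps hx) hq, ?_⟩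
  intro x hx y hy hxy
  have := (integral_periodIntegrand_strictAntiOn hlam hq).comp_strictMonoOn hc_mono hc_maps hx hy hxy
  exact mul_lt_mul_of_pos_left this four_pos
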